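/- arXiv:2101.09494 — 3 statements merged into one kernel-verified Lean document; each statement's English description precedes it below -/
import Mathlib

section
/- Correctness of the proposed three-parameter signature scheme: let p, q be primes with q ∣ p−1, α of order q mod p, x the secret key, y = α^x mod p. Given a hash value h, choose nonces k, l with 1 ≤ k, l ≤ q−1, set r = α^k mod p, s = (α^l mod p) mod q, and t = l^{-1}(h + x·r + k·s) mod q, assuming t is invertible mod q. Then with u₁ = h·t^{-1} mod q, u₂ = (r mod q)·t^{-1} mod q, u₃ = s·t^{-1} mod q, we have ((α^{u₁} · y^{u₂} · r^{u₃}) mod p) mod q = s. -/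
theorem new_scheme_verification_correct (p q : ℕ) [Fact p.Prime] [Fact q.Prime]
    (hdvd : q ∣ p - 1) (α : ZMod p) (hα : orderOf α = q)
    (x h : ℤ) (y : ZMod p) (hy : y = α ^ x)
    (k l : ℤ) (hk1 : 1 ≤ k) (hk2 : k ≤ (q : ℤ) - 1) (hl1 : 1 ≤ l) (hl2 : l ≤ (q : ℤ) - 1)
    (r : ZMod p) (hr : r = α ^ k)
    (s : ZMod q) (hs : s = (((α ^ l : ZMod p)).val : ZMod q))
    (t : ZMod q)
    (ht : t = ((l : ZMod q))⁻¹ * ((h : ZMod q) + (x : ZMod q) * (r.val : ZMod q) + (k : ZMod q) * s))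
    (ht0 : t ≠ 0)
    (u₁ u₂ u₃ : ZMod q)
    (hu₁ : u₁ = (h : ZMod q) * t⁻¹) (hu₂ : u₂ = (r.val : ZMod q) * t⁻¹) (hu₃ : u₃ = s * t⁻¹) :
    (((α ^ u₁.val * y ^ u₂.val * r ^ u₃.val : ZMod p)).val : ZMod q) = s := by
  have hq2 : 2 ≤ q := (Fact.out : q.Prime).two_le
  have hα0 : α ≠ 0 := by
    intro h0
    have := pow_orderOf_eq_one α
    rw [hα, h0] at this
    simp [zero_pow (by omega : q ≠ 0)] at this
  have hlq : ((l : ZMod q)) ≠ 0 := by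
    rw [Ne, ZMod.intCast_zmod_eq_zero_iff_dvd]
    intro hdl
    have := Int.le_of_dvd (by omega) hdl
    omega
  -- l * t = h + x * r.val + k * s
  have hlt : (l : ZMod q) * t = (h : ZMod q) + (x : ZMod q) * (r.val : ZMod q) + (k : ZMod q) * s := by
    rw [ht, ← mul_assoc, mul_inv_cancel₀ hlq, one_mul]
  have key : u₁ + (x : ZMod q) * u₂ + (k : ZMod q) * u₃ = (l : ZMod q) := by
    rw [hu₁, hu₂, hu₃]
    have : ((h : ZMod q) + (x : ZMod q) * (r.val : ZMod q) + (k : ZMod q) * s) * t⁻¹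
        = (l : ZMod q) * (t * t⁻¹) := by rw [← hlt]; ring
    rw [mul_inv_cancel₀ ht0, mul_one] at this
    rw [← this]; ring
  set m : ℤ := (u₁.val : ℤ) + x * (u₂.val : ℤ) + k * (u₃.val : ℤ) with hm
  have hcast : ((m : ℤ) : ZMod q) = (l : ZMod q) := by
    push_cast [hm]
    simpa [ZMod.intCast_cast, ZMod.natCast_val, ZMod.intCast_zmod_cast] using key
  have hdvdml : (q : ℤ) ∣ m - l := by
    rwa [← ZMod.intCast_zmod_eq_zero_iff_dvd, Int.cast_sub, sub_eq_zero]
  obtain ⟨c, hc⟩ := hdvdml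
  have hαq : α ^ (q : ℤ) = 1 := by
    rw [zpow_natCast, ← hα, pow_orderOf_eq_one]
  have hml : α ^ m = α ^ l := by
    have : m = l + q * c := by linarith
    rw [this, zpow_add₀ hα0, zpow_mul, hαq, one_zpow, mul_one]
  have hprod : α ^ u₁.val * y ^ u₂.val * r ^ u₃.val = α ^ l := by
    rw [hy, hr, ← hml, hm]
    rw [zpow_add₀ hα0, zpow_add₀ hα0, zpow_mul, zpow_mul]
    norm_cast
  rw [hprod, ← hs]
end

section
/- Existential forgery without a hash function: let p, q be primes with q ∣ p−1, α of order q mod p, y = α^x mod p. For arbitrary k, k', l, l' with l' invertible mod q, set r = α^k·y^{k'} mod p, s = (α^l·y^{l'} mod p) mod q, t = (l')^{-1}·(r + k'·s) mod q, and m = t·l − k·s mod q. If t is invertible mod q, then (r, s, t) satisfies the verification equation ((α^{m·t^{-1}} · y^{r·t^{-1}} · r^{s·t^{-1}}) mod p) mod q = s, where exponents are reduced mod q. -/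
/-!
Since `y = α ^ x`, every quantity in the verification equation is a power of `α`, with exponents
that only matter modulo `q = orderOf α`. As `r = α ^ (k + x k')`, the verified product is
`α ^ ((m + x r + (k + x k') s) / t)`, and `t l' = r + k' s` turns this exponent into `l + x l'`.
So the product is `α ^ l * y ^ l'`, whose reduction mod `q` is `s` by construction.
-/

theorem zpow_eq_zpow_of_intCast_eq {G₀ : Type*} [GroupWithZero G₀] {g : G₀} {a b : ℤ}
    (h : (a : ZMod (orderOf g)) = b) : g ^ a = g ^ b := by
  nontriviality G₀
  obtain rfl | hg := eq_or_ne g 0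
  · rw [orderOf_zero] at h
    exact congrArg _ h
  · lift g to G₀ˣ using hg.isUnit
    rw [orderOf_units, ZMod.intCast_eq_intCast_iff] at h
    rw [← Units.val_zpow_eq_zpow_val, ← Units.val_zpow_eq_zpow_val, zpow_eq_zpow_iff_modEq.2 h]

theorem forged_signature_exponent_eq {F : Type*} [Field F] {x k k' l l' R s t m : F}
    (hl' : l' ≠ 0) (ht : t = l'⁻¹ * (R + k' * s)) (ht0 : t ≠ 0) (hm : m = t * l - k * s) :
    m * t⁻¹ + x * (R * t⁻¹) + (k + x * k') * (s * t⁻¹) = l + x * l' := by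
  have htl' : t * l' = R + k' * s := by rw [ht]; field_simp
  calc _ = (m + k * s + x * (R + k' * s)) * t⁻¹ := by ring
    _ = (t * l + x * (t * l')) * t⁻¹ := by rw [hm, htl']; ring
    _ = l + x * l' := by field_simp

theorem existential_forgery_without_hash_general (p q : ℕ) [Fact p.Prime] [Fact q.Prime]
    (α : ZMod p) (hα : orderOf α = q)
    (x : ℤ) (y : ZMod p) (hy : y = α ^ x)
    (k k' l l' : ℤ) (hl' : (l' : ZMod q) ≠ 0)
    (r : ZMod p) (hr : r = α ^ k * y ^ k')
    (s : ZMod q) (hs : s = (((α ^ l * y ^ l' : ZMod p)).val : ZMod q))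
    (t : ZMod q) (ht : t = ((l' : ZMod q))⁻¹ * ((r.val : ZMod q) + (k' : ZMod q) * s))
    (ht0 : t ≠ 0)
    (m : ZMod q) (hm : m = t * (l : ZMod q) - (k : ZMod q) * s) :
    (((α ^ (m * t⁻¹).val * y ^ ((r.val : ZMod q) * t⁻¹).val *
        r ^ (s * t⁻¹).val : ZMod p)).val : ZMod q) = s := by
  have hα0 : α ≠ 0 := fun h => (Fact.out : q.Prime).ne_zero (hα ▸ h ▸ orderOf_zero _)
  have hrα : r = α ^ (k + x * k') := by rw [hr, hy, ← zpow_mul, zpow_add₀ hα0]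
  set R : ZMod q := (r.val : ZMod q)
  have hverify : α ^ (m * t⁻¹).val * y ^ (R * t⁻¹).val * r ^ (s * t⁻¹).val = α ^ l * y ^ l' :=
    calc _ = α ^ (((m * t⁻¹).val : ℤ) + x * (R * t⁻¹).val + (k + x * k') * (s * t⁻¹).val) := by
          rw [hy, hrα, ← zpow_natCast, ← zpow_natCast, ← zpow_natCast, ← zpow_mul, ← zpow_mul,
            ← zpow_add₀ hα0, ← zpow_add₀ hα0]
      _ = α ^ (l + x * l') := by
          apply zpow_eq_zpow_of_intCast_eq
          rw [hα]
          push_cast [ZMod.natCast_zmod_val]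
          exact forged_signature_exponent_eq hl' ht ht0 hm
      _ = α ^ l * y ^ l' := by rw [hy, zpow_add₀ hα0, zpow_mul]
  rw [hverify, hs]

theorem existential_forgery_without_hash (p q : ℕ) [Fact p.Prime] [Fact q.Prime]
    (hdvd : q ∣ p - 1) (α : ZMod p) (hα : orderOf α = q)
    (x : ℤ) (y : ZMod p) (hy : y = α ^ x)
    (k k' l l' : ℤ) (hl' : (l' : ZMod q) ≠ 0)
    (r : ZMod p) (hr : r = α ^ k * y ^ k')
    (s : ZMod q) (hs : s = (((α ^ l * y ^ l' : ZMod p)).val : ZMod q))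
    (t : ZMod q) (ht : t = ((l' : ZMod q))⁻¹ * ((r.val : ZMod q) + (k' : ZMod q) * s))
    (ht0 : t ≠ 0)
    (m : ZMod q) (hm : m = t * (l : ZMod q) - (k : ZMod q) * s) :
    (((α ^ (m * t⁻¹).val * y ^ ((r.val : ZMod q) * t⁻¹).val *
        r ^ (s * t⁻¹).val : ZMod p)).val : ZMod q) = s :=
  existential_forgery_without_hash_general p q α hα x y hy k k' l l' hl' r hr s hs t ht ht0 m hm
end

section
/- Correctness of the generalized (n+1)-parameter signature: let p, q be primes with q ∣ p−1, α of order q mod p, x the secret key with y = α^x mod p. Choose k₁,…,kₙ with rᵢ = α^{kᵢ} mod p for 1 ≤ i ≤ n−1, rₙ = (α^{kₙ} mod p) mod q, and r_{n+1} = kₙ^{-1}(h + x·r₁ + Σ_{i=1}^{n−1} kᵢ·r_{i+1}) mod q, assuming kₙ and r_{n+1} are invertible mod q. Then ((α^{h·r_{n+1}^{-1}} · y^{r₁·r_{n+1}^{-1}} · Π_{i=1}^{n−1} rᵢ^{r_{i+1}·r_{n+1}^{-1}}) mod p) mod q = rₙ, exponents reduced mod q. -/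
/-!
Since `α` has order `q`, exponents of `α` may be read in `ZMod q`: `a ↦ α ^ a.val` turns sums
and products of exponents into products and powers. The verification product is therefore
`α ^ ((h + x r₁ + ∑ kᵢ rᵢ₊₁) r_{n+1}⁻¹)`, and by the definition of `r_{n+1}` that exponent
is `kₙ`.
-/

section OrderOfEq

variable {M : Type*} [Monoid M] {g : M} {q : ℕ}

theorem pow_val_mul_of_orderOf_eq (hg : orderOf g = q) (a b : ZMod q) :
    g ^ (a * b).val = (g ^ a.val) ^ b.val := by
  subst hg
  rw [ZMod.val_mul, pow_mod_orderOf, pow_mul]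

variable [NeZero q]

theorem pow_val_add_of_orderOf_eq (hg : orderOf g = q) (a b : ZMod q) :
    g ^ (a + b).val = g ^ a.val * g ^ b.val := by
  subst hg
  rw [ZMod.val_add, pow_mod_orderOf, pow_add]

end OrderOfEq

theorem prod_pow_val_of_orderOf_eq {M ι : Type*} [CommMonoid M] {g : M} {q : ℕ} [NeZero q]
    (hg : orderOf g = q) (s : Finset ι) (f : ι → ZMod q) :
    ∏ i ∈ s, g ^ (f i).val = g ^ (∑ i ∈ s, f i).val := by
  classical
  induction s using Finset.induction with
  | empty => simp
  | insert i s hi ih =>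
    rw [Finset.prod_insert hi, Finset.sum_insert hi, ih, pow_val_add_of_orderOf_eq hg]

theorem zpow_eq_pow_val_intCast_of_orderOf_eq {G₀ : Type*} [GroupWithZero G₀] {g : G₀}
    {q : ℕ} [NeZero q] (hg : orderOf g = q) (z : ℤ) : g ^ z = g ^ (z : ZMod q).val := by
  have hfin : IsOfFinOrder g :=
    isOfFinOrder_iff_pow_eq_one.mpr ⟨q, NeZero.pos q, hg ▸ pow_orderOf_eq_one g⟩
  obtain ⟨u, rfl⟩ := hfin.isUnit
  rw [orderOf_units] at hg
  subst hg
  rw [← Units.val_zpow_eq_zpow_val, ← Units.val_pow_eq_pow_val, ← zpow_natCast, ZMod.val_intCast,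
    zpow_mod_orderOf]

theorem generalized_scheme_correct_general (p q : ℕ) [Fact p.Prime] [Fact q.Prime]
    (α : ZMod p) (hα : orderOf α = q)
    (n : ℕ)
    (x h : ℤ) (y : ZMod p) (hy : y = α ^ x)
    (k : ℕ → ℤ)
    (rp : ℕ → ZMod p) (hrp : ∀ i, 1 ≤ i → i ≤ n - 1 → rp i = α ^ k i)
    (rq : ℕ → ZMod q) (hrq : ∀ i, rq i = ((rp i).val : ZMod q))
    (hrn : rp n = α ^ k n)
    (hkn : ((k n : ZMod q)) ≠ 0)
    (rlast : ZMod q)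
    (hrlast : rlast = ((k n : ZMod q))⁻¹ *
      ((h : ZMod q) + (x : ZMod q) * rq 1 +
        ∑ i ∈ Finset.Icc 1 (n - 1), (k i : ZMod q) * rq (i + 1)))
    (hrlast0 : rlast ≠ 0) :
    (((α ^ ((h : ZMod q) * rlast⁻¹).val * y ^ (rq 1 * rlast⁻¹).val *
        ∏ i ∈ Finset.Icc 1 (n - 1), (rp i) ^ (rq (i + 1) * rlast⁻¹).val : ZMod p)).val
      : ZMod q) = rq n := by
  have hexp : (h : ZMod q) * rlast⁻¹ + x * (rq 1 * rlast⁻¹) +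
      ∑ i ∈ Finset.Icc 1 (n - 1), (k i : ZMod q) * (rq (i + 1) * rlast⁻¹) = k n := by
    have hS := eq_inv_mul_iff_mul_eq₀ hkn |>.mp hrlast
    simp only [← mul_assoc]
    rw [← Finset.sum_mul, ← add_mul, ← add_mul, ← hS, mul_inv_cancel_right₀ hrlast0]
  have hy' : y ^ (rq 1 * rlast⁻¹).val = α ^ ((x : ZMod q) * (rq 1 * rlast⁻¹)).val := by
    rw [hy, zpow_eq_pow_val_intCast_of_orderOf_eq hα, pow_val_mul_of_orderOf_eq hα]
  have hprod : ∏ i ∈ Finset.Icc 1 (n - 1), rp i ^ (rq (i + 1) * rlast⁻¹).val =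
      α ^ (∑ i ∈ Finset.Icc 1 (n - 1), (k i : ZMod q) * (rq (i + 1) * rlast⁻¹)).val := by
    rw [← prod_pow_val_of_orderOf_eq hα]
    refine Finset.prod_congr rfl fun i hi => ?_
    obtain ⟨hi1, hin⟩ := Finset.mem_Icc.mp hi
    rw [hrp i hi1 hin, zpow_eq_pow_val_intCast_of_orderOf_eq hα, pow_val_mul_of_orderOf_eq hα]
  rw [hy', hprod, ← pow_val_add_of_orderOf_eq hα, ← pow_val_add_of_orderOf_eq hα, hexp,
    ← zpow_eq_pow_val_intCast_of_orderOf_eq hα, ← hrn, hrq]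

theorem generalized_scheme_correct (p q : ℕ) [Fact p.Prime] [Fact q.Prime]
    (hdvd : q ∣ p - 1) (α : ZMod p) (hα : orderOf α = q)
    (n : ℕ) (hn : 2 ≤ n)
    (x h : ℤ) (y : ZMod p) (hy : y = α ^ x)
    (k : ℕ → ℤ)
    (rp : ℕ → ZMod p) (hrp : ∀ i, 1 ≤ i → i ≤ n - 1 → rp i = α ^ k i)
    (rq : ℕ → ZMod q) (hrq : ∀ i, rq i = ((rp i).val : ZMod q))
    (hrn : rp n = α ^ k n)
    (hkn : ((k n : ZMod q)) ≠ 0)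
    (rlast : ZMod q)
    (hrlast : rlast = ((k n : ZMod q))⁻¹ *
      ((h : ZMod q) + (x : ZMod q) * rq 1 +
        ∑ i ∈ Finset.Icc 1 (n - 1), (k i : ZMod q) * rq (i + 1)))
    (hrlast0 : rlast ≠ 0) :
    (((α ^ ((h : ZMod q) * rlast⁻¹).val * y ^ (rq 1 * rlast⁻¹).val *
        ∏ i ∈ Finset.Icc 1 (n - 1), (rp i) ^ (rq (i + 1) * rlast⁻¹).val : ZMod p)).val
      : ZMod q) = rq n :=
  generalized_scheme_correct_general p q α hα n x h y hy k rp hrp rq hrq hrn hkn rlast hrlast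
    hrlast0
end
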